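/- Let (a,b) be a fictitious-play trajectory. Then for every T ≥ 5, the final radius satisfies ρ_T ≤ 2·√(10T). -/

import Mathlib

open MeasureTheory

/-- Bob's choice of the left or right piece. -/
inductive Choice
  | L
  | R
deriving DecidableEq

/-- The cumulative valuation `V(x) = ∫_0^x v`. -/
noncomputable def cumul (v : ℝ → ℝ) (x : ℝ) : ℝ := ∫ y in (0:ℝ)..x, v y

/-- `v` is an integrable value density on `[0,1]`, bounded between `lo` and `hi`,
integrating to `1`. -/
def IsDensity (lo hi : ℝ) (v : ℝ → ℝ) : Prop :=
  IntervalIntegrable v volume 0 1 ∧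
  (∀ x ∈ Set.Icc (0:ℝ) 1, lo ≤ v x ∧ v x ≤ hi) ∧
  (∫ y in (0:ℝ)..1, v y) = 1

/-- Alice's round-`t` utility: if Bob picks `L` she gets `[a_t,1]`, else `[0,a_t]`. -/
noncomputable def uA (vA : ℝ → ℝ) (a : ℕ → ℝ) (b : ℕ → Choice) (t : ℕ) : ℝ :=
  if b t = Choice.L then 1 - cumul vA (a t) else cumul vA (a t)

/-- Bob's round-`t` utility: if he picks `L` he gets `[0,a_t]`, else `[a_t,1]`. -/
noncomputable def uB (vB : ℝ → ℝ) (a : ℕ → ℝ) (b : ℕ → Choice) (t : ℕ) : ℝ :=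
  if b t = Choice.L then cumul vB (a t) else 1 - cumul vB (a t)

/-- `α_t = r_t − ℓ_t`: number of `R` choices minus number of `L` choices up to round `t`. -/
noncomputable def alphaFP (b : ℕ → Choice) (t : ℕ) : ℝ :=
  ∑ i ∈ Finset.Icc 1 t, (if b i = Choice.R then (1:ℝ) else -1)

/-- `β_t = Σ_{i=1}^t (2 V_B(a_i) − 1)`. -/
noncomputable def betaFP (vB : ℝ → ℝ) (a : ℕ → ℝ) (t : ℕ) : ℝ :=
  ∑ i ∈ Finset.Icc 1 t, (2 * cumul vB (a i) - 1)

/-- The radius `ρ_t = |α_t| + |β_t|`. -/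
noncomputable def rhoFP (vB : ℝ → ℝ) (a : ℕ → ℝ) (b : ℕ → Choice) (t : ℕ) : ℝ :=
  |alphaFP b t| + |betaFP vB a t|

/-- `(a,b)` is a fictitious-play trajectory. -/
def IsFictitiousPlay (vB : ℝ → ℝ) (a : ℕ → ℝ) (b : ℕ → Choice) : Prop :=
  ∀ t : ℕ,
    (0 < alphaFP b t → a (t+1) = 1) ∧
    (alphaFP b t < 0 → a (t+1) = 0) ∧
    (0 < betaFP vB a t → b (t+1) = Choice.L) ∧
    (betaFP vB a t < 0 → b (t+1) = Choice.R)

/-- Round `t` is axis-crossing. -/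
def AxisCrossing (vB : ℝ → ℝ) (a : ℕ → ℝ) (b : ℕ → Choice) (t : ℕ) : Prop :=
  alphaFP b t = 0 ∨
  (betaFP vB a t ≤ 0 ∧ 0 < betaFP vB a (t+1)) ∨
  (0 ≤ betaFP vB a t ∧ betaFP vB a (t+1) < 0)

/-!
Write `A = α`, `B = β`. Away from the axes (`A ≠ 0` and `B` keeps its weak sign) each coordinate
pushes the other at unit speed, and since `A` is an integer the radius `|A| + |B|` is conserved.
A crossing raises the radius by at most `2`; right after a crossing one coordinate has absolute
value at most `1`, so the other one, of size about `r`, keeps its sign for about `r` rounds, during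
which the small coordinate moves monotonically and cannot cross again. Hence crossings at radius
`r` are at least `r - 3` rounds apart, and as `(r + 2)² - r² ≈ 4r` a strong induction gives
`ρ_t² ≤ 40 t`.
-/

section Sequences

variable {x : ℕ → ℝ}

lemma abs_sub_le_of_abs_step_le (hx : ∀ t, |x (t + 1) - x t| ≤ 1) (m n : ℕ) :
    |x m - x n| ≤ |(m : ℝ) - n| := by
  wlog hnm : n ≤ m generalizing m n
  · rw [abs_sub_comm, abs_sub_comm (m : ℝ)]
    exact this n m (by omega)
  obtain ⟨k, rfl⟩ := Nat.exists_eq_add_of_le hnm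
  push_cast
  rw [add_sub_cancel_left, abs_of_nonneg (Nat.cast_nonneg (α := ℝ) k)]
  induction k with
  | zero => simp
  | succ k ih =>
    calc |x (n + k + 1) - x n| ≤ |x (n + k + 1) - x (n + k)| + |x (n + k) - x n| :=
          abs_sub_le _ _ _
      _ ≤ 1 + k := add_le_add (hx _) (ih (by omega))
      _ = (k + 1 : ℕ) := by push_cast; ring

lemma pos_of_abs_step_le (hx : ∀ t, |x (t + 1) - x t| ≤ 1) {m n : ℕ}
    (h : |(m : ℝ) - n| < x n) : 0 < x m := by
  have := abs_le.1 (abs_sub_le_of_abs_step_le hx m n)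
  linarith

lemma eq_add_mul_of_step_eq {d : ℝ} {t n : ℕ} (h : ∀ k < n, x (t + k + 1) = x (t + k) + d) :
    x (t + n) = x t + n * d := by
  induction n with
  | zero => simp
  | succ n ih =>
    rw [← add_assoc, h n n.lt_succ_self, ih fun k hk => h k (by omega)]
    push_cast
    ring

end Sequences

lemma Nat.forall_lt_not_or_exists_last (P : ℕ → Prop) (t : ℕ) :
    (∀ u < t, ¬ P u) ∨ ∃ c < t, P c ∧ ∀ u, c < u → u < t → ¬ P u := by
  induction t with
  | zero => exact Or.inl fun u hu => absurd hu u.not_lt_zero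
  | succ t ih =>
    by_cases ht : P t
    · exact Or.inr ⟨t, t.lt_succ_self, ht, fun u hu hu' => absurd hu' (by omega)⟩
    rcases ih with hnone | ⟨c, hct, hc, hlast⟩
    · refine Or.inl fun u hu => ?_
      rcases Nat.lt_succ_iff_lt_or_eq.1 hu with hu | rfl
      exacts [hnone u hu, ht]
    · refine Or.inr ⟨c, hct.trans t.lt_succ_self, hc, fun u hcu hu => ?_⟩
      rcases Nat.lt_succ_iff_lt_or_eq.1 hu with hu | rfl
      exacts [hlast u hcu hu, ht]

namespace FictitiousPlay

def SignChange (x : ℕ → ℝ) (t : ℕ) : Prop :=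
  (x t ≤ 0 ∧ 0 < x (t + 1)) ∨ (0 ≤ x t ∧ x (t + 1) < 0)

lemma signChange_neg {x : ℕ → ℝ} {t : ℕ} : SignChange (-x) t ↔ SignChange x t := by
  simp only [SignChange, Pi.neg_apply, neg_nonpos, neg_pos, neg_nonneg, neg_lt_zero]
  tauto

/-- The dynamics of `(α_t, β_t)` under fictitious play, abstracted to `(A t, B t)`. -/
structure IsDynamics (A B : ℕ → ℝ) : Prop where
  isInt : ∀ t, ∃ n : ℤ, A t = n
  abs_step_A : ∀ t, |A (t + 1) - A t| ≤ 1
  abs_step_B : ∀ t, |B (t + 1) - B t| ≤ 1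
  B_succ_of_pos : ∀ t, 0 < A t → B (t + 1) = B t + 1
  B_succ_of_neg : ∀ t, A t < 0 → B (t + 1) = B t - 1
  A_succ_of_pos : ∀ t, 0 < B t → A (t + 1) = A t - 1
  A_succ_of_neg : ∀ t, B t < 0 → A (t + 1) = A t + 1

def radius (A B : ℕ → ℝ) (t : ℕ) : ℝ := |A t| + |B t|

lemma radius_nonneg (A B : ℕ → ℝ) (t : ℕ) : 0 ≤ radius A B t := by
  unfold radius; positivity

def IsCrossing (A B : ℕ → ℝ) (t : ℕ) : Prop := A t = 0 ∨ SignChange B t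

lemma isCrossing_neg {A B : ℕ → ℝ} {t : ℕ} : IsCrossing (-A) (-B) t ↔ IsCrossing A B t := by
  simp only [IsCrossing, signChange_neg, Pi.neg_apply, neg_eq_zero]

namespace IsDynamics

variable {A B : ℕ → ℝ} (h : IsDynamics A B)
include h

lemma neg : IsDynamics (-A) (-B) where
  isInt t := let ⟨n, hn⟩ := h.isInt t; ⟨-n, by simp [hn]⟩
  abs_step_A t := by
    rw [Pi.neg_apply, Pi.neg_apply, neg_sub_neg, abs_sub_comm]; exact h.abs_step_A t
  abs_step_B t := by
    rw [Pi.neg_apply, Pi.neg_apply, neg_sub_neg, abs_sub_comm]; exact h.abs_step_B t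
  B_succ_of_pos t ht := by
    simp only [Pi.neg_apply, neg_pos] at ht ⊢; rw [h.B_succ_of_neg t ht]; ring
  B_succ_of_neg t ht := by
    simp only [Pi.neg_apply, neg_lt_zero] at ht ⊢; rw [h.B_succ_of_pos t ht]; ring
  A_succ_of_pos t ht := by
    simp only [Pi.neg_apply, neg_pos] at ht ⊢; rw [h.A_succ_of_neg t ht]; ring
  A_succ_of_neg t ht := by
    simp only [Pi.neg_apply, neg_lt_zero] at ht ⊢; rw [h.A_succ_of_pos t ht]; ring

lemma one_le_abs {t : ℕ} (ht : A t ≠ 0) : 1 ≤ |A t| := by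
  obtain ⟨n, hn⟩ := h.isInt t
  rw [hn] at ht ⊢
  exact_mod_cast Int.one_le_abs (by exact_mod_cast ht)

lemma radius_succ_le (t : ℕ) : radius A B (t + 1) ≤ radius A B t + 2 := by
  have hA := (abs_sub_abs_le_abs_sub (A (t + 1)) (A t)).trans (h.abs_step_A t)
  have hB := (abs_sub_abs_le_abs_sub (B (t + 1)) (B t)).trans (h.abs_step_B t)
  unfold radius
  linarith

lemma radius_succ_of_not_isCrossing {t : ℕ} (ht : ¬ IsCrossing A B t) :
    radius A B (t + 1) = radius A B t := by
  have hA0 : A t ≠ 0 := fun hA0 => ht (Or.inl hA0)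
  wlog hA : 0 < A t generalizing A B
  · simpa [radius] using this h.neg (mt isCrossing_neg.1 ht) (by simpa using hA0)
      (by simpa using lt_of_le_of_ne (not_lt.1 hA) hA0)
  have hA1 : 1 ≤ A t := by simpa [abs_of_pos hA] using h.one_le_abs hA0
  have eB := h.B_succ_of_pos t hA
  simp only [IsCrossing, SignChange, not_or, not_and, not_lt] at ht
  obtain ⟨-, hup, hdown⟩ := ht
  unfold radius
  rcases lt_trichotomy (B t) 0 with hB | hB | hB
  · rw [h.A_succ_of_neg t hB, abs_of_neg hB, abs_of_nonpos (hup hB.le), abs_of_pos hA,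
      abs_of_pos (by linarith)]
    linarith
  · linarith [hup hB.le]
  · rw [h.A_succ_of_pos t hB, abs_of_pos hB, abs_of_nonneg (hdown hB.le), abs_of_pos hA,
      abs_of_nonneg (by linarith)]
    linarith

lemma radius_eq_of_forall_not_isCrossing {s t : ℕ} (hst : s ≤ t)
    (hfree : ∀ u, s ≤ u → u < t → ¬ IsCrossing A B u) : radius A B t = radius A B s := by
  induction t, hst using Nat.le_induction with
  | base => rfl
  | succ t hst ih =>
    rw [h.radius_succ_of_not_isCrossing (hfree t hst t.lt_succ_self),
      ih fun u hsu hut => hfree u hsu (hut.trans t.lt_succ_self)]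

lemma abs_le_one_of_isCrossing {t : ℕ} (ht : IsCrossing A B t) :
    |A (t + 1)| ≤ 1 ∨ |B (t + 1)| ≤ 1 := by
  have hA := abs_le.1 (h.abs_step_A t)
  have hB := abs_le.1 (h.abs_step_B t)
  rcases ht with hA0 | ⟨h1, h2⟩ | ⟨h1, h2⟩
  · exact Or.inl (abs_le.2 ⟨by linarith, by linarith⟩)
  all_goals exact Or.inr (abs_le.2 ⟨by linarith, by linarith⟩)

lemma not_isCrossing_of_B_pos {t g : ℕ} (hg : 0 < g) (hB : ∀ k ≤ g + 1, 0 < B (t + k))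
    (ht : IsCrossing A B t) : ¬ IsCrossing A B (t + g) := by
  have hsign : ∀ k ≤ g, ¬ SignChange B (t + k) := by
    rintro k hk (⟨h1, -⟩ | ⟨-, h2⟩)
    · linarith [hB k (by omega)]
    · have := hB (k + 1) (by omega)
      rw [← add_assoc] at this
      linarith
  have hAt : A t = 0 := ht.resolve_right (by simpa using hsign 0 (Nat.zero_le g))
  have hAg : A (t + g) = A t + g * (-1) :=
    eq_add_mul_of_step_eq fun k hk => by rw [h.A_succ_of_pos _ (hB k (by omega))]; ring
  rintro (hA | hS)
  · have : (0 : ℝ) < g := by exact_mod_cast hg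
    linarith
  · exact hsign g le_rfl hS

lemma not_isCrossing_of_A_pos {t g : ℕ} (hg : 0 < g) (hA : ∀ k ≤ g, 0 < A (t + k))
    (ht : IsCrossing A B t) : ¬ IsCrossing A B (t + g) := by
  have hB : ∀ k ≤ g + 1, B (t + k) = B t + k := fun k hk => by
    simpa using eq_add_mul_of_step_eq (n := k) fun j hj => h.B_succ_of_pos _ (hA j (by omega))
  have hg1 : (1 : ℝ) ≤ g := by exact_mod_cast hg
  have hB1 := hB 1 (by omega)
  have hpos : 0 < B (t + 1) := by
    rcases ht.resolve_left (by simpa using (hA 0 (Nat.zero_le g)).ne') with ⟨-, h2⟩ | ⟨h1, h2⟩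
    · exact h2
    · push_cast at hB1; linarith
  rintro (hA0 | ⟨hle, -⟩ | ⟨-, hlt⟩)
  · exact (hA g le_rfl).ne' hA0
  · push_cast at hB1; linarith [hB g (by omega)]
  · have := hB (g + 1) le_rfl
    push_cast at hB1 this
    rw [← add_assoc] at this
    linarith

lemma radius_succ_le_of_isCrossing {t t' : ℕ} (htt' : t < t') (ht : IsCrossing A B t)
    (ht' : IsCrossing A B t') : radius A B (t + 1) ≤ t' - t + 3 := by
  obtain ⟨g, hg, rfl⟩ : ∃ g, 0 < g ∧ t' = t + g := ⟨t' - t, by omega, by omega⟩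
  by_contra! hr
  push_cast at hr
  have hwin : ∀ k ≤ g + 1, |((t + k : ℕ) : ℝ) - (t + 1 : ℕ)| ≤ g := fun k hk => by
    have : (k : ℝ) ≤ g + 1 := by exact_mod_cast hk
    have : (1 : ℝ) ≤ g := by exact_mod_cast hg
    push_cast
    rw [abs_le]
    constructor <;> linarith [k.cast_nonneg (α := ℝ)]
  unfold radius at hr
  rcases h.abs_le_one_of_isCrossing ht with hA1 | hB1
  · rcases lt_abs.1 (show (g : ℝ) < |B (t + 1)| by linarith) with hB | hB
    · exact h.not_isCrossing_of_B_pos hg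
        (fun k hk => pos_of_abs_step_le h.abs_step_B ((hwin k hk).trans_lt hB)) ht ht'
    · exact h.neg.not_isCrossing_of_B_pos hg
        (fun k hk => pos_of_abs_step_le h.neg.abs_step_B ((hwin k hk).trans_lt hB))
        (isCrossing_neg.2 ht) (isCrossing_neg.2 ht')
  · rcases lt_abs.1 (show (g : ℝ) < |A (t + 1)| by linarith) with hA | hA
    · exact h.not_isCrossing_of_A_pos hg
        (fun k hk => pos_of_abs_step_le h.abs_step_A ((hwin k (by omega)).trans_lt hA)) ht ht'
    · exact h.neg.not_isCrossing_of_A_pos hg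
        (fun k hk => pos_of_abs_step_le h.neg.abs_step_A ((hwin k (by omega)).trans_lt hA))
        (isCrossing_neg.2 ht) (isCrossing_neg.2 ht')

lemma sq_radius_le (h0 : radius A B 0 = 0) (t : ℕ) : radius A B t ^ 2 ≤ 40 * t := by
  induction t using Nat.strong_induction_on with
  | _ t ih =>
  rcases t with _ | t
  · simp [h0]
  push_cast
  by_cases ht : IsCrossing A B t
  swap
  · rw [h.radius_succ_of_not_isCrossing ht]
    linarith [ih t t.lt_succ_self]
  have hstep := h.radius_succ_le t
  have hnonneg := radius_nonneg A B (t + 1)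
  rcases Nat.forall_lt_not_or_exists_last (IsCrossing A B) t with hnone | ⟨c, hct, hc, hlast⟩
  · rw [h.radius_eq_of_forall_not_isCrossing t.zero_le fun u _ hu => hnone u hu, h0] at hstep
    nlinarith
  · rw [h.radius_eq_of_forall_not_isCrossing hct hlast] at hstep
    have hgap := h.radius_succ_le_of_isCrossing hct hc ht
    have hsq := ih (c + 1) (by omega)
    push_cast at hsq
    set r := radius A B (c + 1)
    -- `r² ≤ 40 (c + 1) ≤ 40 (t + 4 - r)`, so `(r + 2)² ≤ 40 (t + 1)` as soon as `r ≥ 4`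
    rcases le_or_gt r 4 with hr | hr <;> nlinarith [radius_nonneg A B (c + 1)]

end IsDynamics

lemma cumul_mem_Icc {lo hi : ℝ} (hlo : 0 ≤ lo) {v : ℝ → ℝ} (hv : IsDensity lo hi v) {x : ℝ}
    (hx : x ∈ Set.Icc (0 : ℝ) 1) : cumul v x ∈ Set.Icc (0 : ℝ) 1 := by
  have hpos : 0 ≤ᵐ[volume.restrict (Set.Ioc 0 1)] v :=
    (ae_restrict_mem measurableSet_Ioc).mono fun y hy =>
      hlo.trans (hv.2.1 y (Set.Ioc_subset_Icc_self hy)).1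
  constructor
  · exact intervalIntegral.integral_nonneg hx.1 fun y hy =>
      hlo.trans (hv.2.1 y ⟨hy.1, hy.2.trans hx.2⟩).1
  · rw [← hv.2.2]
    exact intervalIntegral.integral_mono_interval le_rfl hx.1 hx.2 hpos hv.1

lemma alphaFP_succ (b : ℕ → Choice) (t : ℕ) :
    alphaFP b (t + 1) = alphaFP b t + if b (t + 1) = Choice.R then 1 else -1 := by
  rw [alphaFP, alphaFP, Finset.sum_Icc_succ_top (by omega)]

lemma betaFP_succ (vB : ℝ → ℝ) (a : ℕ → ℝ) (t : ℕ) :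
    betaFP vB a (t + 1) = betaFP vB a t + (2 * cumul vB (a (t + 1)) - 1) := by
  rw [betaFP, betaFP, Finset.sum_Icc_succ_top (by omega)]

lemma isDynamics_of_isFictitiousPlay {lo hi : ℝ} (hlo : 0 ≤ lo) {vB : ℝ → ℝ}
    (hB : IsDensity lo hi vB) {a : ℕ → ℝ} {b : ℕ → Choice}
    (ha : ∀ t, 1 ≤ t → a t ∈ Set.Icc (0 : ℝ) 1) (hfp : IsFictitiousPlay vB a b) :
    IsDynamics (alphaFP b) (betaFP vB a) where
  isInt t := ⟨∑ i ∈ Finset.Icc 1 t, if b i = Choice.R then 1 else -1, by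
    simp only [alphaFP, Int.cast_sum, apply_ite (Int.cast : ℤ → ℝ), Int.cast_one, Int.cast_neg]⟩
  abs_step_A t := by rw [alphaFP_succ]; split_ifs <;> norm_num
  abs_step_B t := by
    obtain ⟨h0, h1⟩ := cumul_mem_Icc hlo hB (ha (t + 1) (by omega))
    rw [betaFP_succ, add_sub_cancel_left, abs_le]
    constructor <;> linarith
  B_succ_of_pos t ht := by
    rw [betaFP_succ, (hfp t).1 ht, cumul, hB.2.2]; ring
  B_succ_of_neg t ht := by
    rw [betaFP_succ, (hfp t).2.1 ht, cumul, intervalIntegral.integral_same]; ring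
  A_succ_of_pos t ht := by
    rw [alphaFP_succ, (hfp t).2.2.1 ht, if_neg Choice.noConfusion]; ring
  A_succ_of_neg t ht := by
    rw [alphaFP_succ, (hfp t).2.2.2 ht, if_pos rfl]

end FictitiousPlay

theorem radius_upper_bound_general
    (δ Δ : ℝ) (hδ : 0 < δ)
    (vB : ℝ → ℝ) (hB : IsDensity δ Δ vB)
    (a : ℕ → ℝ) (b : ℕ → Choice)
    (ha : ∀ t : ℕ, 1 ≤ t → a t ∈ Set.Icc (0:ℝ) 1)
    (hfp : IsFictitiousPlay vB a b)
    (T : ℕ) :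
    rhoFP vB a b T ≤ 2 * Real.sqrt (10 * T) := by
  have h := FictitiousPlay.isDynamics_of_isFictitiousPlay hδ.le hB ha hfp
  have hsq : rhoFP vB a b T ^ 2 ≤ 40 * T :=
    h.sq_radius_le (by simp [FictitiousPlay.radius, alphaFP, betaFP]) T
  have : rhoFP vB a b T / 2 ≤ Real.sqrt (10 * T) := Real.le_sqrt_of_sq_le (by linarith)
  linarith

/-- Under fictitious play, for every `T ≥ 5` the radius satisfies
`ρ_T ≤ 2√(10T)`. -/
theorem radius_upper_bound
    (δ Δ : ℝ) (hδ : 0 < δ) (hδΔ : δ ≤ Δ)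
    (vA vB : ℝ → ℝ) (hA : IsDensity δ Δ vA) (hB : IsDensity δ Δ vB)
    (a : ℕ → ℝ) (b : ℕ → Choice)
    (ha : ∀ t : ℕ, 1 ≤ t → a t ∈ Set.Icc (0:ℝ) 1)
    (hfp : IsFictitiousPlay vB a b)
    (T : ℕ) (hT : 5 ≤ T) :
    rhoFP vB a b T ≤ 2 * Real.sqrt (10 * T) :=
  radius_upper_bound_general δ Δ hδ vB hB a b ha hfp T
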